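/- arXiv:2512.05684 — 8 statements merged into one kernel-verified Lean document; each statement's English description precedes it below -/
import Mathlib

section
/- Let L be a first-order language with no function or constant symbols and finitely many relation symbols. Let K be a Fraïssé class of finite L-structures all of whose members are rigid, and let M be the Fraïssé limit of K. Then at least one of the following holds: (a) there exists a strict linear order < on the underlying set of M that is preserved by every L-automorphism of M; or (b) there exist structures A, B ∈ K with |A| = 2 such that for every C ∈ K there is a 2-coloring of the set of L-embeddings of A into C with the property that no L-embedding g : B → C is monochromatic, i.e. for every such g there exist L-embeddings f₁, f₂ : A → C whose ranges are contained in the range of g and which receive different colors. -/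
/-!
By rigidity, no two distinct elements `a, b` of `M` have the same pair type in both orders:
otherwise swapping the two points would be a nontrivial automorphism of the substructure
`{a, b}`. Choosing one of each two mutually reverse pair types (an orientation `σ`) therefore
gives an automorphism-invariant tournament on `M`, which is a strict linear order unless it
contains a 3-cycle.

Suppose (b) fails. If every orientation had a 3-cycle, put one 3-cycle for each of the finitely
many orientations into a finite substructure `B` of `M`. Applying the failure of (b) once for
each pair type yields `C ∈ K` such that, for a linear order on `C`, some copy of `B` in `C` has
its pairs ordered according to their type only. This defines an orientation whose 3-cycle in
`B` would be a 3-cycle of the linear order of `C`.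
-/

open FirstOrder FirstOrder.Language CategoryTheory

open Set Function

universe u v w

namespace FirstOrder.Language

variable {L : Language.{u, v}}

theorem mem_age_of_embedding {α N : Type w} [L.Structure N] [Finite α] {S : L.Structure α}
    (e : @Embedding L α N S _) : (⟨α, S⟩ : Bundled L.Structure) ∈ L.age N :=
  ⟨Structure.FG.of_finite, ⟨e⟩⟩

variable [L.IsRelational]

section Pullback

variable {α N N' : Type*} [L.Structure N] [L.Structure N']

theorem structure_ext_of_isRelational {S T : L.Structure α}
    (h : ∀ {n} (r : L.Relations n) (x : Fin n → α), S.RelMap r x ↔ T.RelMap r x) :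
    S = T := by
  obtain ⟨fS, rS⟩ := S
  obtain ⟨fT, rT⟩ := T
  congr
  · funext n f
    exact isEmptyElim f
  · funext n r x
    exact propext (h r x)

instance [Finite α] [Finite (Σ n, L.Relations n)] : Finite (L.Structure α) :=
  Finite.of_injective (fun S (i : Σ n, L.Relations n) (x : Fin i.1 → α) => S.RelMap i.2 x)
    fun _ _ h => structure_ext_of_isRelational fun r x =>
      iff_of_eq (congr_fun (congr_fun h ⟨_, r⟩) x)

@[reducible]
def pullbackStructure (f : α → N) : L.Structure α where
  funMap f := isEmptyElim f
  RelMap r x := Structure.RelMap r (f ∘ x)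

theorem pullbackStructure_embedding_comp (e : N ↪[L] N') (f : α → N) :
    pullbackStructure (e ∘ f) = (pullbackStructure f : L.Structure α) :=
  structure_ext_of_isRelational fun r x => e.map_rel r (f ∘ x)

def pullbackEmbedding {S : L.Structure α} (f : α → N) (hf : Injective f)
    (hS : pullbackStructure f = S) : @Embedding L α N S _ :=
  letI := S
  { toFun := f
    inj' := hf
    map_fun' := fun g => isEmptyElim g
    map_rel' := fun r x => by subst hS; rfl }

end Pullback

/-- The pair type of `(a, b)` is the structure induced on `ULift Bool` by `false ↦ a`,
`true ↦ b`. -/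
abbrev PairType (L : Language.{u, v}) : Type _ := L.Structure (ULift.{w} Bool)

@[reducible]
def PairType.swap (S : L.PairType) : L.PairType :=
  letI := S
  pullbackStructure (Equiv.swap (ULift.up false) (ULift.up true))

theorem PairType.swap_swap (S : L.PairType) : S.swap.swap = S :=
  structure_ext_of_isRelational fun r x => by
    show S.RelMap r (_ ∘ (_ ∘ x)) ↔ _
    simp only [Function.comp_def, _root_.Equiv.swap_apply_self]

section Pairs

variable {N N' : Type w} [L.Structure N] [L.Structure N']

def pairMap (a b : N) : ULift.{w} Bool → N := fun i => bif i.down then b else a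

theorem pairMap_injective {a b : N} (h : a ≠ b) : Injective (pairMap a b) := by
  rintro ⟨_ | _⟩ ⟨_ | _⟩ hab <;> first | rfl | exact absurd hab h | exact absurd hab.symm h

theorem comp_pairMap (f : N → N') (a b : N) : f ∘ pairMap a b = pairMap (f a) (f b) := by
  ext ⟨_ | _⟩ <;> rfl

theorem pairMap_comp_swap (a b : N) :
    pairMap a b ∘ Equiv.swap (ULift.up false) (ULift.up true) = pairMap b a := by
  ext ⟨_ | _⟩ <;> simp [pairMap]

@[reducible]
def pairType (a b : N) : L.PairType := pullbackStructure (pairMap a b)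

theorem pairType_swap (a b : N) : (pairType a b : L.PairType).swap = pairType b a := by
  show PairType.swap (pullbackStructure (pairMap a b)) = pullbackStructure (pairMap b a)
  rw [← pairMap_comp_swap a b]
  rfl

theorem Embedding.pairType_apply (e : N ↪[L] N') (a b : N) :
    pairType (e a) (e b) = (pairType a b : L.PairType) := by
  rw [pairType, ← comp_pairMap]
  exact pullbackStructure_embedding_comp e _

end Pairs

theorem PairType.swap_ne_of_rigid {K : Set (Bundled.{w} L.Structure)}
    (hrigid : ∀ A ∈ K, ∀ e : A ≃[L] A, ∀ x : A, e x = x) {S : L.PairType}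
    (hS : (⟨ULift.{w} Bool, S⟩ : Bundled L.Structure) ∈ K) : S.swap ≠ S := by
  intro hswap
  let _ := S
  let e : ULift.{w} Bool ≃[L] ULift.{w} Bool :=
    { toEquiv := _root_.Equiv.swap (ULift.up false) (ULift.up true)
      map_fun' := fun f => isEmptyElim f
      map_rel' := fun r x => iff_of_eq (congrArg (fun T : L.PairType => T.RelMap r x) hswap) }
  have hfix := hrigid _ hS e (ULift.up false)
  rw [show e (ULift.up false) = ULift.up true from _root_.Equiv.swap_apply_left _ _] at hfix
  exact Bool.noConfusion (congrArg ULift.down hfix)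

def IsOrientation (σ : L.PairType → Prop) : Prop :=
  ∀ s : L.PairType, s.swap ≠ s → (σ s.swap ↔ ¬ σ s)

theorem exists_isOrientation_extending {R τ : L.PairType → Prop}
    (hR : ∀ s, R s → R s.swap) (hτ : ∀ s, R s → (τ s.swap ↔ ¬ τ s)) :
    ∃ σ, IsOrientation σ ∧ ∀ s, R s → (σ s ↔ τ s) := by
  classical
  let _ := IsWellOrder.linearOrder (WellOrderingRel : L.PairType → L.PairType → Prop)
  refine ⟨fun s => if R s then τ s else s < s.swap, fun s hs => ?_, fun s hRs => by simp [hRs]⟩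
  by_cases hRs : R s
  · simp [hRs, hR s hRs, hτ s hRs]
  · have hRs' : ¬ R s.swap := fun h => hRs (s.swap_swap ▸ hR _ h)
    simp only [hRs, hRs', if_false, PairType.swap_swap, not_lt]
    exact ⟨le_of_lt, fun h => lt_of_le_of_ne h hs⟩

section OrientedLT

variable {N N' : Type w} [L.Structure N] [L.Structure N'] {σ : L.PairType → Prop}

def orientedLT (σ : L.PairType → Prop) (x y : N) : Prop := x ≠ y ∧ σ (pairType x y)

theorem orientedLT_embedding_apply (e : N ↪[L] N') {x y : N} :
    orientedLT σ (e x) (e y) ↔ orientedLT σ x y := by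
  simp only [orientedLT, e.pairType_apply, e.injective.ne_iff]

variable (hσ : IsOrientation σ)
  (hasymm : ∀ x y : N, x ≠ y → (pairType x y : L.PairType).swap ≠ pairType x y)
include hσ hasymm

theorem orientedLT_swap {x y : N} (hxy : x ≠ y) :
    orientedLT σ y x ↔ ¬ orientedLT σ x y := by
  simp only [orientedLT, ← pairType_swap x y, hσ _ (hasymm x y hxy), ne_eq, hxy, hxy.symm,
    not_false_eq_true, true_and]

theorem isStrictTotalOrder_orientedLT
    (hacyclic : ∀ x y z : N, ¬ (orientedLT σ x y ∧ orientedLT σ y z ∧ orientedLT σ z x)) :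
    IsStrictTotalOrder N (orientedLT σ) where
  trichotomous x y hxy hyx := by
    by_contra hne
    exact hyx ((orientedLT_swap hσ hasymm hne).2 hxy)
  irrefl _ h := h.1 rfl
  trans x y z hxy hyz := by
    have hxz : x ≠ z := by
      rintro rfl
      exact (orientedLT_swap hσ hasymm hxy.1).1 hyz hxy
    by_contra h
    exact hacyclic x y z ⟨hxy, hyz, (orientedLT_swap hσ hasymm hxz).2 h⟩

end OrientedLT

section Ramsey

variable (K : Set (Bundled.{w} L.Structure))

def PairRamsey : Prop :=
  ∀ A ∈ K, ∀ B ∈ K, Nat.card A = 2 → ∃ C ∈ K, ∀ c : (A ↪[L] C) → Bool,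
    ∃ g : B ↪[L] C, ∀ f₁ f₂ : A ↪[L] C,
      range f₁ ⊆ range g → range f₂ ⊆ range g → c f₁ = c f₂

variable {K} {N N' : Type w} [L.Structure N] [L.Structure N']

def IsPairTypeDetermined (r : N → N → Prop) (t : L.PairType) : Prop :=
  ∀ a₁ a₂ b₁ b₂ : N, a₁ ≠ a₂ → b₁ ≠ b₂ → pairType a₁ a₂ = t → pairType b₁ b₂ = t →
    r a₁ a₂ → r b₁ b₂

theorem IsPairTypeDetermined.comp_embedding {r : N' → N' → Prop} {t : L.PairType}
    (h : IsPairTypeDetermined r t) (e : N ↪[L] N') :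
    IsPairTypeDetermined (fun a b => r (e a) (e b)) t :=
  fun _ _ _ _ ha hb hta htb => h _ _ _ _ (e.injective.ne ha) (e.injective.ne hb)
    ((e.pairType_apply _ _).trans hta) ((e.pairType_apply _ _).trans htb)

theorem IsPairTypeDetermined.exists_iff {r : N → N → Prop} {t : L.PairType}
    (h : IsPairTypeDetermined r t) {a b : N} (hab : a ≠ b) (ht : pairType a b = t) :
    (∃ c d, c ≠ d ∧ pairType c d = t ∧ r c d) ↔ r a b :=
  ⟨fun ⟨c, d, hcd, hct, hr⟩ => h c d a b hcd hab hct ht hr, fun hr => ⟨a, b, hab, ht, hr⟩⟩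

theorem exists_isOrientation_of_isPairTypeDetermined {C : Type*} [LinearOrder C] {f : N → C}
    (hf : Function.Injective f)
    (hdet : ∀ t : L.PairType, IsPairTypeDetermined (fun a b => f a < f b) t) :
    ∃ σ : L.PairType → Prop, IsOrientation σ ∧ ∀ a b : N, orientedLT σ a b → f a < f b := by
  have hdet' (a b : N) (hab : a ≠ b) :
      (∃ c d, c ≠ d ∧ pairType c d = pairType a b ∧ f c < f d) ↔ f a < f b :=
    (hdet _).exists_iff hab rfl
  let R (s : L.PairType) : Prop := ∃ a b : N, a ≠ b ∧ pairType a b = s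
  let τ (s : L.PairType) : Prop := ∃ a b : N, a ≠ b ∧ pairType a b = s ∧ f a < f b
  have hRswap : ∀ s, R s → R s.swap := by
    rintro _ ⟨a, b, hab, rfl⟩
    exact ⟨b, a, hab.symm, (pairType_swap a b).symm⟩
  have hτswap : ∀ s, R s → (τ s.swap ↔ ¬ τ s) := by
    rintro _ ⟨a, b, hab, rfl⟩
    rw [pairType_swap]
    refine (hdet' b a hab.symm).trans (Iff.trans ?_ (hdet' a b hab).not.symm)
    exact ⟨lt_asymm, (lt_or_gt_of_ne (hf.ne hab)).resolve_left⟩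
  obtain ⟨σ, hσ, hστ⟩ := exists_isOrientation_extending hRswap hτswap
  exact ⟨σ, hσ, fun a b hab => (hdet' a b hab.1).1 ((hστ _ ⟨a, b, hab.1, rfl⟩).1 hab.2)⟩

theorem PairRamsey.exists_isPairTypeDetermined (hR : PairRamsey K) (hK : Hereditary K)
    {B : Bundled.{w} L.Structure} (hB : B ∈ K) (t : L.PairType) :
    ∃ C ∈ K, ∀ r : C → C → Prop, ∃ g : B ↪[L] C,
      IsPairTypeDetermined (fun a b => r (g a) (g b)) t := by
  classical
  by_cases ht : (⟨ULift.{w} Bool, t⟩ : Bundled L.Structure) ∈ K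
  · obtain ⟨C, hC, hcol⟩ := hR _ ht B hB (by simp)
    refine ⟨C, hC, fun r => ?_⟩
    obtain ⟨g, hg⟩ := hcol fun f => decide (r (f (ULift.up false)) (f (ULift.up true)))
    refine ⟨g, fun a₁ a₂ b₁ b₂ ha hb hta htb => ?_⟩
    let realize {a₁ a₂ : B} (ha : a₁ ≠ a₂) (hta : pairType a₁ a₂ = t) :
        (⟨ULift.{w} Bool, t⟩ : Bundled L.Structure) ↪[L] C :=
      pullbackEmbedding (g ∘ pairMap a₁ a₂) (g.injective.comp (pairMap_injective ha))
        ((pullbackStructure_embedding_comp g _).trans hta)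
    have hcol := hg (realize ha hta) (realize hb htb)
      (range_comp_subset_range (pairMap a₁ a₂) g) (range_comp_subset_range (pairMap b₁ b₂) g)
    exact (decide_eq_decide.1 hcol).1
  · refine ⟨B, hB, fun r => ⟨Embedding.refl L B, fun a₁ a₂ _ _ ha _ hta _ => ?_⟩⟩
    exact absurd (hK B hB (mem_age_of_embedding
      (pullbackEmbedding (pairMap a₁ a₂) (pairMap_injective ha) hta))) ht

theorem PairRamsey.exists_forall_isPairTypeDetermined (hR : PairRamsey K)
    (hK : Hereditary K)
    {B : Bundled.{w} L.Structure} (hB : B ∈ K) (T : Finset L.PairType) :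
    ∃ C ∈ K, ∀ r : C → C → Prop, ∃ g : B ↪[L] C,
      ∀ t ∈ T, IsPairTypeDetermined (fun a b => r (g a) (g b)) t := by
  classical
  induction T using Finset.induction_on with
  | empty => exact ⟨B, hB, fun _ => ⟨Embedding.refl L B, by simp⟩⟩
  | insert t T _ ih =>
    obtain ⟨C', hC', hC'T⟩ := ih
    obtain ⟨C, hC, hCt⟩ := hR.exists_isPairTypeDetermined hK hC' t
    refine ⟨C, hC, fun r => ?_⟩
    obtain ⟨g, hg⟩ := hCt r
    obtain ⟨j, hj⟩ := hC'T fun a b => r (g a) (g b)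
    exact ⟨g.comp j, (Finset.forall_mem_insert _ _ _).2 ⟨hg.comp_embedding j, hj⟩⟩

end Ramsey

section FraisseLimit

variable [Finite (Σ n, L.Relations n)] {K : Set (Bundled.{w} L.Structure)}
  {M : Type w} [L.Structure M] [Countable M]

theorem PairRamsey.exists_isOrientation_acyclic (hR : PairRamsey K) (hK : IsFraisse K)
    (hM : IsFraisseLimit K M) :
    ∃ σ : L.PairType → Prop, IsOrientation σ ∧
      ∀ x y z : M, ¬ (orientedLT σ x y ∧ orientedLT σ y z ∧ orientedLT σ z x) := by
  by_contra! hcyclic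
  choose x y z hxyz using hcyclic
  set F : Set M := ⋃ (σ) (hσ : IsOrientation σ), {x σ hσ, y σ hσ, z σ hσ}
  have hF : F.Finite := finite_iUnion fun σ => finite_iUnion fun hσ => toFinite _
  let B := Substructure.closure L F
  have hB : (Bundled.of B : Bundled L.Structure) ∈ K :=
    hM.age ▸ age.fg_substructure (Substructure.fg_closure hF)
  have := Fintype.ofFinite L.PairType
  obtain ⟨C, hC, hCdet⟩ := hR.exists_forall_isPairTypeDetermined hK.hereditary hB Finset.univ
  let _ := IsWellOrder.linearOrder (WellOrderingRel : C → C → Prop)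
  obtain ⟨j, hj⟩ := hCdet (· < ·)
  obtain ⟨σ, hσ, hlt⟩ := exists_isOrientation_of_isPairTypeDetermined j.injective
    fun t => hj t (Finset.mem_univ t)
  have hF_lt {p q : M} (hp : p ∈ F) (hq : q ∈ F) (hpq : orientedLT σ p q) :
      j ⟨p, Substructure.subset_closure hp⟩ < j ⟨q, Substructure.subset_closure hq⟩ :=
    hlt _ _ ((orientedLT_embedding_apply B.subtype).1 hpq)
  have hx : x σ hσ ∈ F := mem_iUnion₂.2 ⟨σ, hσ, by simp⟩
  have hy : y σ hσ ∈ F := mem_iUnion₂.2 ⟨σ, hσ, by simp⟩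
  have hz : z σ hσ ∈ F := mem_iUnion₂.2 ⟨σ, hσ, by simp⟩
  obtain ⟨hxy, hyz, hzx⟩ := hxyz σ hσ
  exact lt_irrefl _ ((hF_lt hx hy hxy).trans ((hF_lt hy hz hyz).trans (hF_lt hz hx hzx)))

end FraisseLimit

end FirstOrder.Language

theorem stmt0_general {L : FirstOrder.Language.{u, v}} [L.IsRelational]
    [Finite (Σ n, L.Relations n)]
    (K : Set (Bundled.{w} L.Structure))
    (hK : IsFraisse K)
    (hrigid : ∀ A ∈ K, ∀ e : A ≃[L] A, ∀ x : A, e x = x)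
    (M : Type w) [L.Structure M] [Countable M]
    (hM : IsFraisseLimit K M) :
    (∃ lt : M → M → Prop, IsStrictTotalOrder M lt ∧
        ∀ (g : M ≃[L] M) (x y : M), lt x y → lt (g x) (g y)) ∨
    (∃ A ∈ K, ∃ B ∈ K, Nat.card A = 2 ∧
      ∀ C ∈ K, ∃ c : (A ↪[L] C) → Bool,
        ∀ g : B ↪[L] C, ∃ f₁ f₂ : A ↪[L] C,
          Set.range ⇑f₁ ⊆ Set.range ⇑g ∧ Set.range ⇑f₂ ⊆ Set.range ⇑g ∧
          c f₁ ≠ c f₂) := by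
  by_cases hR : PairRamsey K
  · obtain ⟨σ, hσ, hacyclic⟩ := hR.exists_isOrientation_acyclic hK hM
    have hasymm (x y : M) (hxy : x ≠ y) : (pairType x y : L.PairType).swap ≠ pairType x y :=
      PairType.swap_ne_of_rigid hrigid <| hM.age ▸
        mem_age_of_embedding (pullbackEmbedding (pairMap x y) (pairMap_injective hxy) rfl)
    exact Or.inl ⟨orientedLT σ, isStrictTotalOrder_orientedLT hσ hasymm hacyclic,
      fun g _ _ => (orientedLT_embedding_apply g.toEmbedding).2⟩
  · right
    simpa [PairRamsey] using hR

/-- Let `L` be a finite relational language, `K` a Fraïssé class of finite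
rigid `L`-structures, and `M` the Fraïssé limit of `K`.  Then either `M` carries a strict
linear order invariant under all of its automorphisms, or there are `A, B ∈ K` with `|A| = 2`
witnessing an explicit failure of the Ramsey property. -/
theorem stmt0 {L : FirstOrder.Language.{u, v}} [L.IsRelational]
    [Finite (Σ n, L.Relations n)]
    (K : Set (Bundled.{w} L.Structure))
    (hK : IsFraisse K)
    (hfin : ∀ A ∈ K, Finite A)
    (hrigid : ∀ A ∈ K, ∀ e : A ≃[L] A, ∀ x : A, e x = x)
    (M : Type w) [L.Structure M] [Countable M]
    (hM : IsFraisseLimit K M) :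
    (∃ lt : M → M → Prop, IsStrictTotalOrder M lt ∧
        ∀ (g : M ≃[L] M) (x y : M), lt x y → lt (g x) (g y)) ∨
    (∃ A ∈ K, ∃ B ∈ K, Nat.card A = 2 ∧
      ∀ C ∈ K, ∃ c : (A ↪[L] C) → Bool,
        ∀ g : B ↪[L] C, ∃ f₁ f₂ : A ↪[L] C,
          Set.range ⇑f₁ ⊆ Set.range ⇑g ∧ Set.range ⇑f₂ ⊆ Set.range ⇑g ∧
          c f₁ ≠ c f₂) :=
  stmt0_general K hK hrigid M hM
end

section
/- Let L be a first-order language with no function or constant symbols and finitely many relation symbols. Let K be a Fraïssé class of finite L-structures all of whose members are rigid, and suppose in addition that any two 2-element members of K are isomorphic. Let M be the Fraïssé limit of K. Then at least one of the following holds: (a) there exists a strict linear order on M preserved by every L-automorphism of M; or (b) there exist A, B ∈ K with |A| = 2 and |B| = 3 such that for every C ∈ K there is a 2-coloring of the set of L-embeddings of A into C with the property that for every L-embedding g : B → C there exist L-embeddings f₁, f₂ : A → C whose ranges are contained in the range of g and which receive different colors. -/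
open FirstOrder FirstOrder.Language CategoryTheory

universe u v w

/-!
Fix a two-element structure `A = {a₀, a₁}` in `K`. As `A` is rigid and every two-element
structure of `K` is isomorphic to it, each pair of distinct points of `M` is the image of
`(a₀, a₁)` under an embedding in exactly one order. This is a tournament on `M` preserved by all
automorphisms. If it is transitive, it is the required order. Otherwise it has a directed
3-cycle, spanning some `B ∈ K`; colouring `f : A ↪ C` by whether `f a₀ < f a₁` in a fixed linear
order of `C`, no copy of `B` sees only one colour.
-/

namespace FirstOrder.Language

theorem IsFraisseLimit.closure_mem {L : Language} [Countable (Σ l, L.Functions l)]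
    {K : Set (Bundled.{w} L.Structure)} {M : Type w} [L.Structure M] [Countable M]
    (hM : IsFraisseLimit K M) {s : Set M} (hs : s.Finite) :
    Bundled.mk (Substructure.closure L s) ∈ K :=
  hM.age ▸ age.fg_substructure (Substructure.fg_closure hs)

variable {L : Language} {A M N : Type*} [L.Structure A] [L.Structure M] [L.Structure N]

noncomputable def Embedding.equivOfSurjective (f : M ↪[L] N) (hf : Function.Surjective f) :
    M ≃[L] N :=
  ⟨Equiv.ofBijective f ⟨f.injective, hf⟩, f.map_fun', f.map_rel'⟩

theorem Embedding.eq_of_range_subset_of_rigid [Finite A] (hA : ∀ e : A ≃[L] A, ∀ a, e a = a)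
    {f g : A ↪[L] M} (h : Set.range f ⊆ Set.range g) : f = g := by
  let e : A ↪[L] A := g.equivRange.symm.toEmbedding.comp
    (Embedding.codRestrict g.toHom.range f fun a => h ⟨a, rfl⟩)
  have hge : ∀ a, g (e a) = f a := fun a =>
    congrArg Subtype.val (g.equivRange.apply_symm_apply _)
  have he : Function.Surjective e := Finite.injective_iff_surjective.mp e.injective
  ext a
  exact (hge a).symm.trans (congrArg g (hA (e.equivOfSurjective he) a))

theorem Substructure.card_closure_of_isRelational [L.IsRelational] (s : Set M) :
    Nat.card (Substructure.closure L s) = s.ncard := by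
  rw [← SetLike.coe_sort_coe, Substructure.closure_eq_of_isRelational, Nat.card_coe_set_eq]

variable (L) in
def Arc (a₀ a₁ : A) (x y : M) : Prop :=
  ∃ f : A ↪[L] M, f a₀ = x ∧ f a₁ = y

section Arc

variable {a₀ a₁ : A} {x y : M}

theorem Arc.ne (h01 : a₀ ≠ a₁) : L.Arc a₀ a₁ x y → x ≠ y := by
  rintro ⟨f, rfl, rfl⟩
  exact f.injective.ne h01

theorem Arc.map (φ : M ↪[L] N) : L.Arc a₀ a₁ x y → L.Arc a₀ a₁ (φ x) (φ y) := by
  rintro ⟨f, rfl, rfl⟩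
  exact ⟨φ.comp f, rfl, rfl⟩

theorem Arc.codRestrict (S : L.Substructure M) (hspan : ∀ a, a = a₀ ∨ a = a₁) (hx : x ∈ S)
    (hy : y ∈ S) : L.Arc a₀ a₁ x y → L.Arc a₀ a₁ (⟨x, hx⟩ : S) ⟨y, hy⟩ := by
  rintro ⟨f, rfl, rfl⟩
  have hf : ∀ a, f a ∈ S := fun a => by rcases hspan a with rfl | rfl <;> assumption
  exact ⟨Embedding.codRestrict S f hf, rfl, rfl⟩

theorem Arc.asymm [Finite A] (hA : ∀ e : A ≃[L] A, ∀ a, e a = a) (h01 : a₀ ≠ a₁)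
    (hspan : ∀ a, a = a₀ ∨ a = a₁) : L.Arc a₀ a₁ x y → ¬ L.Arc a₀ a₁ y x := by
  rintro ⟨f, rfl, rfl⟩ ⟨g, hg₀, hg₁⟩
  have hfg : f = g := Embedding.eq_of_range_subset_of_rigid hA <| by
    rintro _ ⟨a, rfl⟩
    rcases hspan a with rfl | rfl
    exacts [⟨a₁, hg₁⟩, ⟨a₀, hg₀⟩]
  exact h01 (g.injective (by rw [hg₀, hfg]))

theorem arc_or_arc_of_equiv_closure [L.IsRelational] (h01 : a₀ ≠ a₁)
    (e : A ≃[L] Substructure.closure L {x, y}) : L.Arc a₀ a₁ x y ∨ L.Arc a₀ a₁ y x := by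
  let f := (Substructure.closure L {x, y}).subtype.comp e.toEmbedding
  have hf : ∀ a, f a = x ∨ f a = y := fun a =>
    (Substructure.mem_closure_iff_of_isRelational L ({x, y} : Set M) _).mp (e a).2
  have hne : f a₀ ≠ f a₁ := f.injective.ne h01
  rcases hf a₀ with h₀ | h₀ <;> rcases hf a₁ with h₁ | h₁
  · exact absurd (h₀.trans h₁.symm) hne
  · exact Or.inl ⟨f, h₀, h₁⟩
  · exact Or.inr ⟨f, h₀, h₁⟩
  · exact absurd (h₀.trans h₁.symm) hne

theorem exists_coloring_of_arc_cycle {B C : Type*} [L.Structure B] [L.Structure C]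
    (h01 : a₀ ≠ a₁) {x y z : B} (hxy : L.Arc a₀ a₁ x y) (hyz : L.Arc a₀ a₁ y z)
    (hzx : L.Arc a₀ a₁ z x) :
    ∃ c : (A ↪[L] C) → Bool, ∀ g : B ↪[L] C, ∃ f₁ f₂ : A ↪[L] C,
      Set.range f₁ ⊆ Set.range g ∧ Set.range f₂ ⊆ Set.range g ∧ c f₁ ≠ c f₂ := by
  classical
  let _ : LinearOrder C := linearOrderOfSTO WellOrderingRel
  refine ⟨fun f => decide (f a₀ < f a₁), fun g => ?_⟩
  have hgxy : g x ≠ g y := g.injective.ne (hxy.ne h01)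
  -- a linear order contains no directed 3-cycle, in either orientation
  have hcycle : ¬ ((g x < g y ↔ g y < g z) ∧ (g y < g z ↔ g z < g x)) := by grind
  obtain ⟨exy, hx, hy⟩ := hxy
  obtain ⟨eyz, hy', hz⟩ := hyz
  obtain ⟨ezx, hz', hx'⟩ := hzx
  have hrange (e : A ↪[L] B) : Set.range (g.comp e) ⊆ Set.range g :=
    Set.range_comp_subset_range e g
  by_cases hcol : (g x < g y ↔ g y < g z)
  · refine ⟨g.comp eyz, g.comp ezx, hrange _, hrange _, ?_⟩
    simpa [hy', hz, hz', hx'] using fun h => hcycle ⟨hcol, h⟩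
  · refine ⟨g.comp exy, g.comp eyz, hrange _, hrange _, ?_⟩
    simpa [hx, hy, hy', hz] using hcol

theorem IsFraisseLimit.exists_card_three_of_arc_cycle [L.IsRelational]
    [Countable (Σ l, L.Functions l)] {K : Set (Bundled.{w} L.Structure)} {M : Type w}
    [L.Structure M] [Countable M] (hM : IsFraisseLimit K M) (h01 : a₀ ≠ a₁)
    (hspan : ∀ a, a = a₀ ∨ a = a₁) {x y z : M} (hxy : L.Arc a₀ a₁ x y)
    (hyz : L.Arc a₀ a₁ y z) (hzx : L.Arc a₀ a₁ z x) :
    ∃ B ∈ K, Nat.card B = 3 ∧ ∀ C : Bundled.{w} L.Structure, ∃ c : (A ↪[L] C) → Bool,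
      ∀ g : B ↪[L] C, ∃ f₁ f₂ : A ↪[L] C,
        Set.range f₁ ⊆ Set.range g ∧ Set.range f₂ ⊆ Set.range g ∧ c f₁ ≠ c f₂ := by
  set B := Substructure.closure L {x, y, z}
  have hB3 : Nat.card B = 3 := by
    rw [Substructure.card_closure_of_isRelational, Set.ncard_eq_three]
    exact ⟨x, y, z, hxy.ne h01, (hzx.ne h01).symm, hyz.ne h01, rfl⟩
  have hxB : x ∈ B := Substructure.subset_closure (by simp)
  have hyB : y ∈ B := Substructure.subset_closure (by simp)
  have hzB : z ∈ B := Substructure.subset_closure (by simp)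
  exact ⟨Bundled.mk B, hM.closure_mem (Set.toFinite _), hB3, fun C =>
    exists_coloring_of_arc_cycle h01 (hxy.codRestrict B hspan hxB hyB)
      (hyz.codRestrict B hspan hyB hzB) (hzx.codRestrict B hspan hzB hxB)⟩

end Arc

end FirstOrder.Language

theorem stmt1_general {L : FirstOrder.Language.{u, v}} [L.IsRelational]
    (K : Set (Bundled.{w} L.Structure))
    (hrigid : ∀ A ∈ K, ∀ e : A ≃[L] A, ∀ x : A, e x = x)
    (h2iso : ∀ A ∈ K, ∀ B ∈ K, Nat.card A = 2 → Nat.card B = 2 → Nonempty (A ≃[L] B))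
    (M : Type w) [L.Structure M] [Countable M]
    (hM : IsFraisseLimit K M) :
    (∃ lt : M → M → Prop, IsStrictTotalOrder M lt ∧
        ∀ (g : M ≃[L] M) (x y : M), lt x y → lt (g x) (g y)) ∨
    (∃ A ∈ K, ∃ B ∈ K, Nat.card A = 2 ∧ Nat.card B = 3 ∧
      ∀ C ∈ K, ∃ c : (A ↪[L] C) → Bool,
        ∀ g : B ↪[L] C, ∃ f₁ f₂ : A ↪[L] C,
          Set.range ⇑f₁ ⊆ Set.range ⇑g ∧ Set.range ⇑f₂ ⊆ Set.range ⇑g ∧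
          c f₁ ≠ c f₂) := by
  rcases subsingleton_or_nontrivial M with hM₁ | ⟨x₀, y₀, hxy₀⟩
  · exact Or.inl ⟨WellOrderingRel, inferInstance, fun g x y h => by
      rwa [Subsingleton.elim (g x) x, Subsingleton.elim (g y) y]⟩
  have card_pair {x y : M} (hxy : x ≠ y) : Nat.card (Substructure.closure L {x, y}) = 2 := by
    rw [Substructure.card_closure_of_isRelational, Set.ncard_pair hxy]
  set A₀ : Bundled L.Structure := Bundled.mk (Substructure.closure L {x₀, y₀})
  have hA₀K : A₀ ∈ K := hM.closure_mem (Set.toFinite _)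
  have hA₀2 : Nat.card A₀ = 2 := card_pair hxy₀
  have : Finite A₀ := Nat.finite_of_card_ne_zero (by omega)
  obtain ⟨a₀, a₁, h01, huniv⟩ := Nat.card_eq_two_iff.mp hA₀2
  have hspan (a : A₀) : a = a₀ ∨ a = a₁ := by
    simpa using (huniv ▸ Set.mem_univ a : a ∈ ({a₀, a₁} : Set A₀))
  have htotal {x y : M} (hxy : x ≠ y) : L.Arc a₀ a₁ x y ∨ L.Arc a₀ a₁ y x :=
    arc_or_arc_of_equiv_closure h01
      (h2iso A₀ hA₀K _ (hM.closure_mem (Set.toFinite _)) hA₀2 (card_pair hxy)).some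
  by_cases htrans : ∀ x y z : M, L.Arc a₀ a₁ x y → L.Arc a₀ a₁ y z → L.Arc a₀ a₁ x z
  · refine Or.inl ⟨L.Arc a₀ a₁, ?_, fun g x y => Arc.map g.toEmbedding⟩
    exact
      { trichotomous := fun x y hnxy hnyx => by_contra fun hxy => (htotal hxy).elim hnxy hnyx
        irrefl := fun x hxx => hxx.ne h01 rfl
        trans := htrans }
  push Not at htrans
  obtain ⟨x, y, z, hxy, hyz, hnxz⟩ := htrans
  have hxz : x ≠ z := by rintro rfl; exact Arc.asymm (hrigid A₀ hA₀K) h01 hspan hxy hyz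
  have hzx := (htotal hxz).resolve_left hnxz
  obtain ⟨B, hBK, hB3, hB⟩ := hM.exists_card_three_of_arc_cycle h01 hspan hxy hyz hzx
  exact Or.inr ⟨A₀, hA₀K, B, hBK, hA₀2, hB3, fun C _ => hB C⟩

/-- As in Statement 0, but when `K` has a unique `2`-element structure up to
isomorphism, the failure of the Ramsey property can be witnessed with `|A| = 2` and `|B| = 3`. -/
theorem stmt1 {L : FirstOrder.Language.{u, v}} [L.IsRelational]
    [Finite (Σ n, L.Relations n)]
    (K : Set (Bundled.{w} L.Structure))
    (hK : IsFraisse K)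
    (hfin : ∀ A ∈ K, Finite A)
    (hrigid : ∀ A ∈ K, ∀ e : A ≃[L] A, ∀ x : A, e x = x)
    (h2iso : ∀ A ∈ K, ∀ B ∈ K, Nat.card A = 2 → Nat.card B = 2 → Nonempty (A ≃[L] B))
    (M : Type w) [L.Structure M] [Countable M]
    (hM : IsFraisseLimit K M) :
    (∃ lt : M → M → Prop, IsStrictTotalOrder M lt ∧
        ∀ (g : M ≃[L] M) (x y : M), lt x y → lt (g x) (g y)) ∨
    (∃ A ∈ K, ∃ B ∈ K, Nat.card A = 2 ∧ Nat.card B = 3 ∧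
      ∀ C ∈ K, ∃ c : (A ↪[L] C) → Bool,
        ∀ g : B ↪[L] C, ∃ f₁ f₂ : A ↪[L] C,
          Set.range ⇑f₁ ⊆ Set.range ⇑g ∧ Set.range ⇑f₂ ⊆ Set.range ⇑g ∧
          c f₁ ≠ c f₂) :=
  stmt1_general K hrigid h2iso M hM
end

section
/- Let L be a first-order language with no function or constant symbols and finitely many relation symbols, and let M be a countable ultrahomogeneous L-structure. Suppose there exists a strict linear order < on the underlying set of M that is preserved by every L-automorphism of M. Then every finite induced substructure A of M is rigid: the only L-automorphism of A is the identity. -/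
open FirstOrder FirstOrder.Language

universe u v w

lemma aux_strictMono_eq_id {α : Type*} [Finite α] [LinearOrder α] {f : α → α}
    (hf : StrictMono f) (x : α) : f x = x := by
  rcases lt_trichotomy (f x) x with h | h | h
  · have hd : ∀ n : ℕ, f^[n + 1] x < f^[n] x := by
      intro n
      induction n with
      | zero => simpa using h
      | succ k ih => simpa [Function.iterate_succ_apply'] using hf ih
    have : StrictAnti (fun n : ℕ => f^[n] x) := strictAnti_nat_of_succ_lt hd
    haveI := Finite.of_injective _ this.injective
    exact (not_finite ℕ).elim
  · exact h
  · have hd : ∀ n : ℕ, f^[n] x < f^[n + 1] x := by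
      intro n
      induction n with
      | zero => simpa using h
      | succ k ih => simpa [Function.iterate_succ_apply'] using hf ih
    have : StrictMono (fun n : ℕ => f^[n] x) := strictMono_nat_of_lt_succ hd
    haveI := Finite.of_injective _ this.injective
    exact (not_finite ℕ).elim

/-- If `M` is a countable ultrahomogeneous structure over a finite relational
language carrying a strict linear order invariant under all automorphisms of `M`, then every
finite induced substructure of `M` is rigid. -/
theorem stmt4 {L : FirstOrder.Language.{u, v}} [L.IsRelational]
    [Finite (Σ n, L.Relations n)]
    (M : Type w) [L.Structure M] [Countable M]
    (hM : L.IsUltrahomogeneous M)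
    (lt : M → M → Prop) (hlt : IsStrictTotalOrder M lt)
    (hpres : ∀ (g : M ≃[L] M) (x y : M), lt x y → lt (g x) (g y))
    (S : L.Substructure M) (hS : Finite S) :
    ∀ e : S ≃[L] S, ∀ x : S, e x = x := by
  intro e
  have hfin : (S : Set M).Finite := Set.toFinite _
  have hfg : S.FG := (Substructure.fg_def).2 ⟨S, hfin, Substructure.closure_eq S⟩
  obtain ⟨g, hg⟩ := hM S hfg (S.subtype.comp e.toEmbedding)
  have hge : ∀ x : S, g x = (e x : M) := by
    intro x
    have := congr_fun (congr_arg DFunLike.coe hg) x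
    simpa using this.symm
  haveI := hlt
  haveI : DecidableRel lt := Classical.decRel lt
  letI : LinearOrder M := linearOrderOfSTO lt
  letI : LinearOrder S := Subtype.instLinearOrder _
  have hmono : StrictMono (fun x : S => e x) := by
    intro a b hab
    have hab' : lt ↑a ↑b := hab
    have h1 : lt (g a) (g b) := hpres g a b hab'
    rw [hge, hge] at h1
    exact (h1 : lt ↑(e a) ↑(e b))
  intro x
  exact aux_strictMono_eq_id hmono x
end

section
/- Let X be a finite set and let → be a tournament on X. Then the group of all permutations g of X satisfying (x → y ↔ g x → g y) for all x, y ∈ X has odd order. -/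
/-- The automorphism group of a finite tournament has odd order. -/
theorem stmt6 (X : Type*) [Finite X] (arc : X → X → Prop)
    (h1 : ∀ x, ¬ arc x x) (h2 : ∀ x y, x ≠ y → Xor' (arc x y) (arc y x)) :
    Odd (Nat.card {g : Equiv.Perm X // ∀ x y, arc x y ↔ arc (g x) (g y)}) := by
  classical
  let G : Subgroup (Equiv.Perm X) :=
    { carrier := {g | ∀ x y, arc x y ↔ arc (g x) (g y)}
      one_mem' := fun x y => Iff.rfl
      mul_mem' := by
        intro a b ha hb x y
        exact (hb x y).trans (ha (b x) (b y))
      inv_mem' := by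
        intro g hg x y
        have := hg (g⁻¹ x) (g⁻¹ y)
        simpa using this.symm }
  have hcard : Nat.card {g : Equiv.Perm X // ∀ x y, arc x y ↔ arc (g x) (g y)}
      = Nat.card G := by
    apply Nat.card_congr
    exact Equiv.subtypeEquivRight (fun g => Iff.rfl)
  rw [hcard]
  rw [Nat.not_even_iff_odd.symm]
  intro heven
  have hpos : 0 < Nat.card G := Nat.card_pos
  have h2dvd : 2 ∣ Nat.card G := heven.two_dvd
  have : Fintype G := Fintype.ofFinite G
  rw [Nat.card_eq_fintype_card] at h2dvd
  obtain ⟨g, hg⟩ := exists_prime_orderOf_dvd_card (G := G) 2 h2dvd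
  have hgne : g ≠ 1 := by
    intro h
    rw [h, orderOf_one] at hg
    norm_num at hg
  have hsq : g * g = 1 := by
    have := pow_orderOf_eq_one g
    rw [hg] at this
    simpa [pow_two] using this
  -- find x with g x ≠ x
  have hex : ∃ x, (g : Equiv.Perm X) x ≠ x := by
    by_contra h
    push_neg at h
    apply hgne
    ext x
    exact h x
  obtain ⟨x, hx⟩ := hex
  have hgmem : ∀ a b, arc a b ↔ arc ((g : Equiv.Perm X) a) ((g : Equiv.Perm X) b) := g.2
  have hgg : (g : Equiv.Perm X) ((g : Equiv.Perm X) x) = x := by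
    have : ((g * g : G) : Equiv.Perm X) x = x := by rw [hsq]; rfl
    simpa using this
  have hiff : arc x ((g : Equiv.Perm X) x) ↔ arc ((g : Equiv.Perm X) x) x := by
    have := hgmem x ((g : Equiv.Perm X) x)
    rwa [hgg] at this
  rcases h2 x ((g : Equiv.Perm X) x) (Ne.symm hx) with ⟨h3, h4⟩ | ⟨h3, h4⟩
  · exact h4 (hiff.mp h3)
  · exact h4 (hiff.mpr h3)
end

section
/- For every finite tournament (X, →) there exists a 2-coloring c of the set of arcs {(u,v) : u → v} such that no 3-cycle is monochromatic: for all x, y, z with x → y, y → z, and z → x, the three arcs (x,y), (y,z), (z,x) do not all receive the same color. Consequently, with A the 2-element tournament and B the 3-element tournament carrying a 3-cycle, for every finite tournament C there is a 2-coloring of the embeddings of A into C such that no embedding of B into C is monochromatic; hence the class of finite tournaments is not a Ramsey class. -/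
open FirstOrder FirstOrder.Language FirstOrder.Language.Structure CategoryTheory

/-- The single binary relation of the language `Language.graph` (the language with one binary
relation symbol and no other symbols), interpreted in a structure `M`. -/
abbrev arc {M : Type*} [Language.graph.Structure M] (x y : M) : Prop :=
  RelMap Language.adj ![x, y]

/-- A structure for the language with a single binary relation is a tournament if the relation
is irreflexive and exactly one of `x → y`, `y → x` holds for distinct `x`, `y`. -/
def IsTournament (M : Type*) [Language.graph.Structure M] : Prop :=
  (∀ x : M, ¬ arc x x) ∧ ∀ x y : M, x ≠ y → Xor' (arc x y) (arc y x)

/-- The class of all finite tournaments, as structures for the language with a single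
binary relation symbol. -/
def TournK : Set (Bundled Language.graph.Structure) :=
  {M | Finite M ∧ IsTournament M}

/-- A class `K` of structures is a Ramsey class if for all `A, B ∈ K` there is `C ∈ K` such
that every `2`-colouring of the embeddings `A ↪ C` admits a monochromatic embedding `B ↪ C`. -/
def IsRamseyClass {L : FirstOrder.Language} (K : Set (Bundled L.Structure)) : Prop :=
  ∀ A ∈ K, ∀ B ∈ K, ∃ C ∈ K, ∀ c : (A ↪[L] C) → Bool,
    ∃ g : B ↪[L] C, ∀ f₁ f₂ : A ↪[L] C,
      Set.range ⇑f₁ ⊆ Set.range ⇑g → Set.range ⇑f₂ ⊆ Set.range ⇑g → c f₁ = c f₂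


/-!
Colour an arc `u → v` of a tournament by whether it goes up or down in some linear order of the
vertices. A cyclic triangle can neither go up three times nor down three times, so it is never
monochromatic. An embedding of the `2`-element tournament is the same thing as an arc, so this
colouring of arcs is a colouring of embeddings of `A` under which no cyclic triangle `B` is
monochromatic.
-/

theorem not_lt_iff_lt_and_lt_iff_lt {α : Type*} [LinearOrder α] {a b c : α} (hab : a ≠ b) :
    ¬((a < b ↔ b < c) ∧ (b < c ↔ c < a)) := by
  grind

theorem exists_arcColouring_forall_not_monochromatic_triangle {X : Type*} (r : X → X → Prop)
    (hr : ∀ x, ¬ r x x) :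
    ∃ c : {p : X × X // r p.1 p.2} → Bool,
      ∀ x y z, ∀ (h₁ : r x y) (h₂ : r y z) (h₃ : r z x),
        ¬(c ⟨(x, y), h₁⟩ = c ⟨(y, z), h₂⟩ ∧ c ⟨(y, z), h₂⟩ = c ⟨(z, x), h₃⟩) := by
  let e := embeddingToCardinal (α := X)
  refine ⟨fun p => decide (e p.1.1 < e p.1.2), fun x y z h₁ h₂ _ => ?_⟩
  simp only [decide_eq_decide]
  exact not_lt_iff_lt_and_lt_iff_lt (e.injective.ne fun h => hr x (h ▸ h₁))

section Arc

variable {M N : Type*} [Language.graph.Structure M] [Language.graph.Structure N]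

theorem relMap_adj_iff_arc (x : Fin 2 → M) : RelMap Language.adj x ↔ arc (x 0) (x 1) := by
  rw [arc, show ![x 0, x 1] = x by ext i; fin_cases i <;> rfl]

theorem FirstOrder.Language.Embedding.arc_iff (f : M ↪[Language.graph] N) (x y : M) :
    arc (f x) (f y) ↔ arc x y :=
  (relMap_adj_iff_arc (f ∘ ![x, y])).symm.trans (f.map_rel Language.adj ![x, y])

def embeddingOfArcIff (f : M → N) (hf : Function.Injective f)
    (h : ∀ x y, arc (f x) (f y) ↔ arc x y) : M ↪[Language.graph] N where
  toFun := f
  inj' := hf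
  map_fun' F := F.elim
  map_rel' := by
    rintro _ ⟨⟩ x
    rw [relMap_adj_iff_arc, relMap_adj_iff_arc]
    exact h (x 0) (x 1)

end Arc

namespace IsTournament

variable {M N : Type*} [Language.graph.Structure M] [Language.graph.Structure N]

theorem ne_of_arc (hM : IsTournament M) {x y : M} (h : arc x y) : x ≠ y :=
  fun hxy => hM.1 x (hxy ▸ h)

theorem not_arc_of_arc (hM : IsTournament M) {x y : M} (h : arc x y) : ¬ arc y x :=
  fun h' => (hM.2 x y (hM.ne_of_arc h)).elim (fun p => p.2 h') (fun p => p.2 h)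

theorem exists_arc_of_card_eq_two (hM : IsTournament M) (h2 : Nat.card M = 2) :
    ∃ a b : M, arc a b ∧ ∀ t, t = a ∨ t = b := by
  obtain ⟨x, y, hxy, huniv⟩ := Nat.card_eq_two_iff.mp h2
  have hall : ∀ t, t = x ∨ t = y := fun t => by simpa using huniv.ge (Set.mem_univ t)
  rcases hM.2 x y hxy with ⟨h, -⟩ | ⟨h, -⟩
  · exact ⟨x, y, h, hall⟩
  · exact ⟨y, x, h, fun t => (hall t).symm⟩

theorem exists_embedding_of_arc (hM : IsTournament M) (hN : IsTournament N) {a b : M}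
    (hab : arc a b) (hall : ∀ t, t = a ∨ t = b) {u v : N} (huv : arc u v) :
    ∃ f : M ↪[Language.graph] N, f a = u ∧ f b = v := by
  classical
  have hba : b ≠ a := (hM.ne_of_arc hab).symm
  let f : M → N := fun t => if t = a then u else v
  have hf : Function.Injective f := by
    intro s t hst
    rcases hall s with rfl | rfl <;> rcases hall t with rfl | rfl <;>
      simp_all [f, hN.ne_of_arc huv, (hN.ne_of_arc huv).symm]
  refine ⟨embeddingOfArcIff f hf fun s t => ?_, if_pos rfl, if_neg hba⟩
  rcases hall s with rfl | rfl <;> rcases hall t with rfl | rfl <;>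
    simp [f, hba, hab, huv, hM.1, hN.1, hM.not_arc_of_arc hab, hN.not_arc_of_arc huv]

end IsTournament

theorem exists_embeddingColouring_forall_not_monochromatic {A B C : Type*}
    [Language.graph.Structure A] [Language.graph.Structure B] [Language.graph.Structure C]
    (hA : IsTournament A) (hA2 : Nat.card A = 2) (hC : IsTournament C) {x y z : B}
    (hxy : arc x y) (hyz : arc y z) (hzx : arc z x) :
    ∃ c : (A ↪[Language.graph] C) → Bool,
      ∀ g : B ↪[Language.graph] C, ∃ f₁ f₂ : A ↪[Language.graph] C,
        Set.range f₁ ⊆ Set.range g ∧ Set.range f₂ ⊆ Set.range g ∧ c f₁ ≠ c f₂ := by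
  obtain ⟨a, b, hab, hall⟩ := hA.exists_arc_of_card_eq_two hA2
  obtain ⟨c₀, hc₀⟩ := exists_arcColouring_forall_not_monochromatic_triangle (arc (M := C)) hC.1
  let c (f : A ↪[Language.graph] C) : Bool := c₀ ⟨(f a, f b), (f.arc_iff a b).2 hab⟩
  have lift : ∀ (g : B ↪[Language.graph] C) {s t : B} (h : arc (g s) (g t)),
      ∃ f : A ↪[Language.graph] C, Set.range f ⊆ Set.range g ∧ c f = c₀ ⟨(g s, g t), h⟩ := by
    intro g s t h
    obtain ⟨f, hfa, hfb⟩ := hA.exists_embedding_of_arc hC hab hall h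
    refine ⟨f, ?_, by simp only [c, hfa, hfb]⟩
    rintro _ ⟨r, rfl⟩
    rcases hall r with rfl | rfl
    exacts [⟨s, hfa.symm⟩, ⟨t, hfb.symm⟩]
  refine ⟨c, fun g => ?_⟩
  have h₁ := (g.arc_iff x y).2 hxy
  have h₂ := (g.arc_iff y z).2 hyz
  have h₃ := (g.arc_iff z x).2 hzx
  obtain ⟨f₁, hf₁, hc₁⟩ := lift g h₁
  obtain ⟨f₂, hf₂, hc₂⟩ := lift g h₂
  obtain ⟨f₃, hf₃, hc₃⟩ := lift g h₃
  by_cases h₁₂ : c₀ ⟨(g x, g y), h₁⟩ = c₀ ⟨(g y, g z), h₂⟩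
  · exact ⟨f₂, f₃, hf₂, hf₃, by rw [hc₂, hc₃]; exact fun h₂₃ => hc₀ _ _ _ h₁ h₂ h₃ ⟨h₁₂, h₂₃⟩⟩
  · exact ⟨f₁, f₂, hf₁, hf₂, by rwa [hc₁, hc₂]⟩

abbrev relStructure {V : Type*} (r : V → V → Prop) : Language.graph.Structure V where
  RelMap | .adj => fun x => r (x 0) (x 1)

theorem bundled_relStructure_mem_tournK {V : Type*} [Finite V] (r : V → V → Prop)
    (hirr : ∀ x, ¬ r x x) (hxor : ∀ x y, x ≠ y → Xor' (r x y) (r y x)) :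
    (⟨V, relStructure r⟩ : Bundled Language.graph.Structure) ∈ TournK :=
  ⟨‹_›, hirr, hxor⟩

def transitiveTournament₂ : Bundled.{u} Language.graph.Structure :=
  ⟨ULift (Fin 2), relStructure fun s t => s.down < t.down⟩

def cyclicTournament₃ : Bundled.{u} Language.graph.Structure :=
  ⟨ULift (Fin 3), relStructure fun s t => t.down = s.down + 1⟩

theorem transitiveTournament₂_mem_tournK : transitiveTournament₂.{u} ∈ TournK :=
  bundled_relStructure_mem_tournK _ (by decide) (by unfold Xor'; decide)

theorem cyclicTournament₃_mem_tournK : cyclicTournament₃.{u} ∈ TournK :=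
  bundled_relStructure_mem_tournK _ (by decide) (by unfold Xor'; decide)

theorem cyclicTournament₃_exists_cycle :
    ∃ x y z : cyclicTournament₃.{u}, arc x y ∧ arc y z ∧ arc z x :=
  ⟨⟨0⟩, ⟨1⟩, ⟨2⟩, (by decide : (1 : Fin 3) = 0 + 1), (by decide : (2 : Fin 3) = 1 + 1),
    (by decide : (0 : Fin 3) = 2 + 1)⟩

/-- Every finite tournament admits a `2`-colouring of its arcs with no
monochromatic `3`-cycle; consequently, with `A` the `2`-element tournament and `B` the
`3`-element tournament carrying a `3`-cycle, for every finite tournament `C` there is a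
`2`-colouring of the embeddings of `A` into `C` such that no embedding of `B` into `C` is
monochromatic; hence the class of finite tournaments is not a Ramsey class. -/
theorem stmt8 :
    (∀ (X : Type) [Finite X] (r : X → X → Prop),
      (∀ x, ¬ r x x) → (∀ x y, x ≠ y → Xor' (r x y) (r y x)) →
      ∃ c : {p : X × X // r p.1 p.2} → Bool,
        ∀ x y z, ∀ (h₁ : r x y) (h₂ : r y z) (h₃ : r z x),
          ¬(c ⟨(x, y), h₁⟩ = c ⟨(y, z), h₂⟩ ∧ c ⟨(y, z), h₂⟩ = c ⟨(z, x), h₃⟩)) ∧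
    (∀ A ∈ TournK, Nat.card A = 2 →
      ∀ B ∈ TournK, Nat.card B = 3 → (∃ x y z : B, arc x y ∧ arc y z ∧ arc z x) →
      ∀ C ∈ TournK, ∃ c : (A ↪[Language.graph] C) → Bool,
        ∀ g : B ↪[Language.graph] C, ∃ f₁ f₂ : A ↪[Language.graph] C,
          Set.range ⇑f₁ ⊆ Set.range ⇑g ∧ Set.range ⇑f₂ ⊆ Set.range ⇑g ∧ c f₁ ≠ c f₂) ∧
    ¬ IsRamseyClass TournK := by
  refine ⟨fun X _ r hr _ => exists_arcColouring_forall_not_monochromatic_triangle r hr,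
    fun A ⟨_, hA⟩ hA2 B _ _ ⟨x, y, z, hxy, hyz, hzx⟩ C ⟨_, hC⟩ =>
      exists_embeddingColouring_forall_not_monochromatic hA hA2 hC hxy hyz hzx,
    fun hRamsey => ?_⟩
  obtain ⟨C, ⟨-, hC⟩, hmono⟩ :=
    hRamsey _ transitiveTournament₂_mem_tournK _ cyclicTournament₃_mem_tournK
  obtain ⟨x, y, z, hxy, hyz, hzx⟩ := cyclicTournament₃_exists_cycle
  obtain ⟨c, hc⟩ := exists_embeddingColouring_forall_not_monochromatic
    transitiveTournament₂_mem_tournK.2 (by simp [transitiveTournament₂]) hC hxy hyz hzx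
  obtain ⟨g, hg⟩ := hmono c
  obtain ⟨f₁, f₂, h₁, h₂, hne⟩ := hc g
  exact hne (hg f₁ f₂ h₁ h₂)
end

section
/- Let r be a binary relation on a set α such that the transitive closure of r is irreflexive (there is no x with a nonempty r-path from x back to x; i.e., r is acyclic). Then there exists a strict linear order < on α such that r x y implies x < y for all x, y ∈ α. -/
/-- Szpilrajn's extension theorem for strict orders. -/
theorem IsStrictOrder.exists_isStrictTotalOrder_extension {α : Type*} (s : α → α → Prop)
    [IsStrictOrder α s] :
    ∃ lt : α → α → Prop, IsStrictTotalOrder α lt ∧ ∀ x y, s x y → lt x y := by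
  -- the strict part `<` of `partialOrderOfSO s` is `s` itself
  let := partialOrderOfSO s
  have hmono : StrictMono (toLinearExtension : α →o LinearExtension α) :=
    toLinearExtension.monotone.strictMono_of_injective fun _ _ => id
  exact ⟨(· < · : LinearExtension α → LinearExtension α → Prop),
    inferInstanceAs (IsStrictTotalOrder (LinearExtension α) (· < ·)), fun _ _ => @hmono _ _⟩

/-- An acyclic relation (one whose transitive closure is irreflexive) extends
to a strict linear order. -/
theorem stmt9 {α : Type*} (r : α → α → Prop)
    (h : Irreflexive (Relation.TransGen r)) :
    ∃ lt : α → α → Prop, IsStrictTotalOrder α lt ∧ ∀ x y, r x y → lt x y := by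
  have : IsStrictOrder α (Relation.TransGen r) :=
    { irrefl := h, trans := fun _ _ _ => Relation.TransGen.trans }
  obtain ⟨lt, hlt, hext⟩ := IsStrictOrder.exists_isStrictTotalOrder_extension (Relation.TransGen r)
  exact ⟨lt, hlt, fun x y hxy => hext x y (.single hxy)⟩
end

section
/- Let L be a first-order language with no function or constant symbols and finitely many relation symbols, and let M be a countable ultrahomogeneous L-structure. Suppose that for all distinct a, b ∈ M, there is no L-isomorphism of the induced substructure on {a, b} to itself that swaps a and b (equivalently, every 2-element induced substructure of M is rigid). Then there exists a tournament relation → on the underlying set of M that is preserved by every L-automorphism of M (i.e., x → y implies g x → g y for every automorphism g). -/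
open FirstOrder FirstOrder.Language

universe u v w

/-- If `M` is a countable ultrahomogeneous structure over a finite relational
language all of whose `2`-element induced substructures are rigid, then there is a tournament
relation on `M` preserved by every automorphism of `M`. -/
theorem stmt11 {L : FirstOrder.Language.{u, v}} [L.IsRelational]
    [Finite (Σ n, L.Relations n)]
    (M : Type w) [L.Structure M] [Countable M]
    (hM : L.IsUltrahomogeneous M)
    (h2 : ∀ S : L.Substructure M, Nat.card S = 2 → ∀ e : S ≃[L] S, ∀ x : S, e x = x) :
    ∃ arc : M → M → Prop,
      (∀ x, ¬ arc x x) ∧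
      (∀ x y, x ≠ y → Xor' (arc x y) (arc y x)) ∧
      (∀ (g : M ≃[L] M) (x y : M), arc x y → arc (g x) (g y)) := by
  classical
  -- No automorphism swaps a pair of distinct points.
  have noswap : ∀ x y : M, x ≠ y → ∀ g : M ≃[L] M, ¬ (g x = y ∧ g y = x) := by
    intro x y hxy g ⟨hgx, hgy⟩
    set s : Set M := {x, y} with hs
    let S : L.Substructure M := Substructure.closure L s
    have hSs : (S : Set M) = s := Substructure.closure_eq_of_isRelational L s
    have hcard : Nat.card S = 2 := by
      rw [← SetLike.coe_sort_coe, hSs, hs, Nat.card_coe_set_eq, Set.ncard_pair hxy]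
    have hmem : ∀ a : M, a ∈ S → g a ∈ S := by
      intro a ha
      rw [← SetLike.mem_coe, hSs] at ha ⊢
      rcases ha with rfl | rfl
      · exact Or.inr hgx
      · exact Or.inl hgy
    have hmem' : ∀ a : M, a ∈ S → g.symm a ∈ S := by
      intro a ha
      rw [← SetLike.mem_coe, hSs] at ha ⊢
      rcases ha with rfl | rfl
      · rw [← hgy, g.symm_apply_apply]; exact Or.inr rfl
      · rw [← hgx, g.symm_apply_apply]; exact Or.inl rfl
    let e : S ≃[L] S :=
      { toFun := fun a => ⟨g a, hmem a a.2⟩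
        invFun := fun a => ⟨g.symm a, hmem' a a.2⟩
        left_inv := fun a => Subtype.ext (g.symm_apply_apply a)
        right_inv := fun a => Subtype.ext (g.apply_symm_apply a)
        map_fun' := fun {n} f _ => isEmptyElim f
        map_rel' := fun {n} rl v => g.map_rel rl (fun i => ((v i : S) : M)) }
    have hxS : x ∈ S := by rw [← SetLike.mem_coe, hSs]; exact Or.inl rfl
    have he := h2 S hcard e ⟨x, hxS⟩
    apply hxy
    have hgxx : g x = x := congrArg Subtype.val he
    rw [hgx] at hgxx
    exact hgxx.symm
  -- Setoid on ordered pairs: automorphism orbits.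
  let r : M × M → M × M → Prop := fun p q => ∃ g : M ≃[L] M, g p.1 = q.1 ∧ g p.2 = q.2
  have rrefl : ∀ p, r p p := fun p => ⟨FirstOrder.Language.Equiv.refl L M, rfl, rfl⟩
  have rsymm : ∀ {p q}, r p q → r q p := by
    rintro p q ⟨g, h1, h2'⟩
    exact ⟨g.symm, by rw [← h1, g.symm_apply_apply],
      by rw [← h2', g.symm_apply_apply]⟩
  have rtrans : ∀ {p q u}, r p q → r q u → r p u := by
    rintro p q u ⟨g, h1, h2'⟩ ⟨g', h3, h4⟩
    refine ⟨g'.comp g, ?_, ?_⟩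
    · show g' (g p.1) = u.1; rw [h1, h3]
    · show g' (g p.2) = u.2; rw [h2', h4]
  let sd : Setoid (M × M) := ⟨r, rrefl, rsymm, rtrans⟩
  let O := Quotient sd
  let mk : M × M → O := Quotient.mk sd
  let sw : O → O := Quotient.map (fun p => (p.2, p.1))
    (by rintro p q ⟨g, h1, h2'⟩; exact ⟨g, h2', h1⟩)
  have swsw : ∀ o : O, sw (sw o) = o := by
    intro o; induction o using Quotient.inductionOn; rfl
  -- Setoid on orbits: identify an orbit with its swap.
  let r2 : O → O → Prop := fun o o' => o' = o ∨ o' = sw o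
  let sd2 : Setoid O := ⟨r2, fun o => Or.inl rfl,
    by rintro o o' (rfl | rfl)
       · exact Or.inl rfl
       · right; rw [swsw],
    by rintro o o' o'' (rfl | rfl) (h | h)
       · exact Or.inl h
       · exact Or.inr h
       · rw [h]; exact Or.inr rfl
       · rw [h, swsw]; exact Or.inl rfl⟩
  let π : O → Quotient sd2 := Quotient.mk sd2
  refine ⟨fun x y => x ≠ y ∧ mk (x, y) = (π (mk (x, y))).out, ?_, ?_, ?_⟩
  · intro x ⟨h, _⟩; exact h rfl
  · intro x y hxy
    have hswap : sw (mk (x, y)) = mk (y, x) := rfl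
    have hne : mk (x, y) ≠ mk (y, x) := by
      intro h
      rcases Quotient.exact h with ⟨g, h1, h2'⟩
      exact noswap x y hxy g ⟨h1, h2'⟩
    have hπ : π (mk (y, x)) = π (mk (x, y)) := by
      apply Quotient.sound
      show mk (x, y) = mk (y, x) ∨ mk (x, y) = sw (mk (y, x))
      right; rw [← hswap, swsw]
    set t := (π (mk (x, y))).out with ht
    have hout : mk (x, y) = t ∨ mk (x, y) = sw t := by
      have : π t = π (mk (x, y)) := Quotient.out_eq _
      exact Quotient.exact this
    rcases hout with h | h
    · left
      refine ⟨⟨hxy, h⟩, ?_⟩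
      rintro ⟨-, h'⟩
      rw [hπ, ← ht] at h'
      exact hne (h.trans h'.symm)
    · right
      have hyx : mk (y, x) = t := by rw [← hswap, h, swsw]
      refine ⟨⟨hxy.symm, by rw [hπ, ← ht]; exact hyx⟩, ?_⟩
      rintro ⟨-, h'⟩
      rw [← ht] at h'
      exact hne (h'.trans hyx.symm)
  · rintro g x y ⟨hxy, h⟩
    have hne : g x ≠ g y := fun h' => hxy (g.injective h')
    have horb : mk (g x, g y) = mk (x, y) :=
      Quotient.sound (rsymm ⟨g, rfl, rfl⟩)
    exact ⟨hne, by rw [horb]; exact h⟩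
end

section
/- Let L₁ and L₂ be first-order languages with no function or constant symbols (relational languages) with disjoint relation symbols, and let L = L₁ ⊕ L₂ be their sum. Let K₁ be a Fraïssé class of finite L₁-structures with the strong amalgamation property, and K₂ a Fraïssé class of finite L₂-structures with the strong amalgamation property. Let K be the class of all finite L-structures whose L₁-reduct lies in K₁ and whose L₂-reduct lies in K₂. Then K is a Fraïssé class and satisfies the strong amalgamation property. -/
/-! Everything comes from the free amalgam. Given embeddings `A → B₁` and `A → B₂` in the
superposition class, strongly amalgamate the `L₁`-reducts into `C₁` and the `L₂`-reducts into
`C₂`. Strongness says that `B₁` and `B₂` meet in `C₁`, and in `C₂`, exactly along `A`, so both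
amalgams restrict injectively to the pushout `B₁ ⊔_A B₂` of the underlying sets. Pulling the
`L₁`-relations back from `C₁` and the `L₂`-relations back from `C₂` makes this pushout a strong
amalgam, and heredity puts it in the superposition class. Joint embedding is amalgamation over
the empty structure, whose nullary relations are the same in every member because `K₁` and `K₂`
have joint embedding. Countability holds because a structure on a finite set is determined by its
two reducts. -/

open FirstOrder FirstOrder.Language CategoryTheory

universe u₁ v₁ u₂ v₂ w

/-- The strong amalgamation property for a class of structures: amalgamation can be achieved
so that the images of the two structures intersect exactly in the image of the base. -/
def StrongAmalgamation {L : FirstOrder.Language} (K : Set (Bundled L.Structure)) : Prop :=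
  ∀ A ∈ K, ∀ B₁ ∈ K, ∀ B₂ ∈ K, ∀ (f₁ : A ↪[L] B₁) (f₂ : A ↪[L] B₂),
    ∃ C ∈ K, ∃ (g₁ : B₁ ↪[L] C) (g₂ : B₂ ↪[L] C),
      g₁.comp f₁ = g₂.comp f₂ ∧
      Set.range ⇑g₁ ∩ Set.range ⇑g₂ = Set.range ⇑(g₁.comp f₁)

/-- Given classes `K₁` of `L₁`-structures and `K₂` of `L₂`-structures, the class of finite
`(L₁ ⊕ L₂)`-structures whose `L₁`-reduct lies in `K₁` and whose `L₂`-reduct lies in `K₂`. -/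
def superpositionClass {L₁ : FirstOrder.Language.{u₁, v₁}} {L₂ : FirstOrder.Language.{u₂, v₂}}
    (K₁ : Set (Bundled.{w} L₁.Structure)) (K₂ : Set (Bundled.{w} L₂.Structure)) :
    Set (Bundled.{w} (L₁.sum L₂).Structure) :=
  {M | Finite M ∧
    (Bundled.mk M ((LHom.sumInl : L₁ →ᴸ L₁.sum L₂).reduct M) : Bundled L₁.Structure) ∈ K₁ ∧
    (Bundled.mk M ((LHom.sumInr : L₂ →ᴸ L₁.sum L₂).reduct M) : Bundled L₂.Structure) ∈ K₂}

theorem Function.exists_eq_of_range_inter_range {A B₁ B₂ C : Type*} {f₁ : A → B₁} {f₂ : A → B₂}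
    {g₁ : B₁ → C} {g₂ : B₂ → C} (hg₁ : Function.Injective g₁) (hg₂ : Function.Injective g₂)
    (hcomm : g₁ ∘ f₁ = g₂ ∘ f₂) (hrange : Set.range g₁ ∩ Set.range g₂ = Set.range (g₁ ∘ f₁))
    {b₁ : B₁} {b₂ : B₂} (h : g₁ b₁ = g₂ b₂) : ∃ a, f₁ a = b₁ ∧ f₂ a = b₂ := by
  obtain ⟨a, ha⟩ : g₂ b₂ ∈ Set.range (g₁ ∘ f₁) := hrange ▸ ⟨⟨b₁, h⟩, b₂, rfl⟩
  refine ⟨a, hg₁ (ha.trans h.symm), hg₂ ?_⟩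
  rw [← ha, hcomm, Function.comp_apply]

namespace CategoryTheory.Limits.Types.Pushout

universe u

variable {A B₁ B₂ : Type u} {C : Type*} {f₁ : A → B₁} {f₂ : A → B₂}

lemma inl_apply_eq_inr_apply (a : A) : inl (↾f₁) (↾f₂) (f₁ a) = inr (↾f₁) (↾f₂) (f₂ a) :=
  Quot.sound (Rel.inl_inr a)

def lift (u₁ : B₁ → C) (u₂ : B₂ → C) (h : u₁ ∘ f₁ = u₂ ∘ f₂) : Pushout (↾f₁) (↾f₂) → C :=
  Quot.lift (Sum.elim u₁ u₂) (by rintro _ _ ⟨a⟩; exact congrFun h a)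

lemma lift_injective {u₁ : B₁ → C} {u₂ : B₂ → C} (h : u₁ ∘ f₁ = u₂ ∘ f₂)
    (hu₁ : Function.Injective u₁) (hu₂ : Function.Injective u₂)
    (hpb : ∀ b₁ b₂, u₁ b₁ = u₂ b₂ → ∃ a, f₁ a = b₁ ∧ f₂ a = b₂) :
    Function.Injective (lift u₁ u₂ h) := by
  rintro ⟨b | b⟩ ⟨b' | b'⟩ hb
  · exact congrArg _ (congrArg Sum.inl (hu₁ hb))
  · obtain ⟨a, rfl, rfl⟩ := hpb b b' hb
    exact inl_apply_eq_inr_apply a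
  · obtain ⟨a, rfl, rfl⟩ := hpb b' b hb.symm
    exact (inl_apply_eq_inr_apply a).symm
  · exact congrArg _ (congrArg Sum.inr (hu₂ hb))

lemma range_inl_inter_range_inr (hf₁ : Function.Injective f₁) :
    Set.range (inl (↾f₁) (↾f₂)) ∩ Set.range (inr (↾f₁) (↾f₂)) =
      Set.range (inl (↾f₁) (↾f₂) ∘ f₁) := by
  have : Mono (↾f₁) := (mono_iff_injective _).2 hf₁
  ext x
  simp only [Set.mem_inter_iff, Set.mem_range, Function.comp_apply]
  constructor
  · rintro ⟨⟨b, rfl⟩, b', hb'⟩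
    obtain ⟨a, rfl, -⟩ := (inl_eq_inr_iff _ _ b b').1 hb'.symm
    exact ⟨a, rfl⟩
  · rintro ⟨a, rfl⟩
    exact ⟨⟨_, rfl⟩, f₂ a, (inl_apply_eq_inr_apply a).symm⟩

end CategoryTheory.Limits.Types.Pushout

namespace FirstOrder.Language

open Structure

section Embeddings

variable {L : Language} {M N Q : Type*} [L.Structure M] [L.Structure N] [L.Structure Q]

def Embedding.reduct {L' : Language} (ϕ : L →ᴸ L') [L'.Structure M] [L'.Structure N]
    (f : M ↪[L'] N) : @Embedding L M N (ϕ.reduct M) (ϕ.reduct N) :=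
  letI := ϕ.reduct M
  letI := ϕ.reduct N
  { toFun := f
    inj' := f.injective
    map_fun' := fun F x => f.map_fun (ϕ.onFunction F) x
    map_rel' := fun r x => f.map_rel (ϕ.onRelation r) x }

theorem relMap_nullary_iff_of_embedding (gM : M ↪[L] Q) (gN : N ↪[L] Q) (r : L.Relations 0)
    (x : Fin 0 → M) (y : Fin 0 → N) : RelMap r x ↔ RelMap r y := by
  rw [← gM.map_rel r x, ← gN.map_rel r y, Subsingleton.elim (gM ∘ x) (gN ∘ y)]

theorem Equiv.inducedStructure_symm_toEquiv (e : M ≃[L] N) :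
    e.toEquiv.symm.inducedStructure = ‹L.Structure M› := by
  ext n F x
  · exact (congrArg e.symm (e.map_fun F x).symm).trans (e.symm_apply_apply _)
  · exact e.map_rel F x

end Embeddings

section Countability

variable {L : Language}

theorem finite_setOf_nonempty_equiv (X : Type w) [Finite X] (N : Bundled.{w} L.Structure) :
    {s : L.Structure X | Nonempty (Bundled.mk X s ≃[L] N)}.Finite := by
  refine (Set.finite_range fun e : X ≃ N => e.symm.inducedStructure).subset ?_
  rintro s ⟨e⟩
  exact ⟨e.toEquiv, e.inducedStructure_symm_toEquiv⟩

theorem countable_setOf_mem {K : Set (Bundled.{w} L.Structure)}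
    (hK : (Quotient.mk' '' K).Countable) (X : Type w) [Finite X] :
    {s : L.Structure X | Bundled.mk X s ∈ K}.Countable := by
  refine (hK.biUnion fun q _ => (finite_setOf_nonempty_equiv X q.out).countable).mono ?_
  intro s hs
  exact Set.mem_biUnion ⟨_, hs, rfl⟩ ((Quotient.mk_out (s := equivSetoid) _).map Equiv.symm)

theorem countable_quotient_of_countable_setOf_mem {K : Set (Bundled.{w} L.Structure)}
    (hfin : ∀ M ∈ K, Finite M)
    (hinv : ∀ M N : Bundled.{w} L.Structure, Nonempty (M ≃[L] N) → (M ∈ K ↔ N ∈ K))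
    (hc : ∀ n : ℕ, {s : L.Structure (ULift.{w} (Fin n)) | Bundled.mk _ s ∈ K}.Countable) :
    (Quotient.mk' '' K).Countable := by
  refine (Set.countable_iUnion fun n => (hc n).image fun s => Quotient.mk' (Bundled.mk _ s)).mono ?_
  rintro _ ⟨M, hM, rfl⟩
  have := hfin M hM
  obtain ⟨n, ⟨e⟩⟩ := Finite.exists_equiv_fin M
  let e' : M ≃ ULift.{w} (Fin n) := e.trans Equiv.ulift.symm
  let s : L.Structure (ULift.{w} (Fin n)) := e'.inducedStructure
  let eM : M ≃[L] Bundled.mk (ULift.{w} (Fin n)) s := e'.inducedStructureEquiv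
  exact Set.mem_iUnion.2 ⟨n, s, (hinv _ _ ⟨eM⟩).1 hM, Quotient.sound ⟨eM.symm⟩⟩

end Countability

section Relational

variable {L : Language} [L.IsRelational] {M N : Type*} [L.Structure N]

abbrev Structure.comap (f : M → N) : L.Structure M where
  RelMap r x := RelMap r (f ∘ x)

variable [L.Structure M]

def Embedding.ofIsRelational (f : M → N) (hf : Function.Injective f)
    (hrel : ∀ {n} (r : L.Relations n) (x : Fin n → M), RelMap r (f ∘ x) ↔ RelMap r x) :
    M ↪[L] N where
  toFun := f
  inj' := hf
  map_fun' F := isEmptyElim F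
  map_rel' := hrel

end Relational

def Embedding.ofComap {L : Language} [L.IsRelational] {M N : Type*} [L.Structure N] {f : M → N}
    (hf : Function.Injective f) : @Embedding L M N (Structure.comap f) _ :=
  letI := Structure.comap (L := L) f
  Embedding.ofIsRelational f hf fun _ _ => Iff.rfl

section Sum

variable {L₁ L₂ : Language} {X : Type*}

theorem Structure.sum_ext {s t : (L₁.sum L₂).Structure X}
    (h₁ : @LHom.reduct _ _ LHom.sumInl X s = @LHom.reduct _ _ LHom.sumInl X t)
    (h₂ : @LHom.reduct _ _ LHom.sumInr X s = @LHom.reduct _ _ LHom.sumInr X t) : s = t := by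
  ext n (F | F) x
  · exact congrArg (fun s : L₁.Structure X => s.funMap F x) h₁
  · exact congrArg (fun s : L₂.Structure X => s.funMap F x) h₂
  · exact Iff.of_eq (congrArg (fun s : L₁.Structure X => s.RelMap F x) h₁)
  · exact Iff.of_eq (congrArg (fun s : L₂.Structure X => s.RelMap F x) h₂)

variable [L₁.IsRelational] [L₂.IsRelational] {M C₁ C₂ : Type*} [(L₁.sum L₂).Structure M]
  [L₁.Structure C₁] [L₂.Structure C₂]

def Embedding.toSumComap {u : X → C₁} {v : X → C₂} (i : M → X)
    (g₁ : @Embedding L₁ M C₁ ((LHom.sumInl : L₁ →ᴸ L₁.sum L₂).reduct M) _)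
    (g₂ : @Embedding L₂ M C₂ ((LHom.sumInr : L₂ →ᴸ L₁.sum L₂).reduct M) _)
    (hu : u ∘ i = g₁) (hv : v ∘ i = g₂) :
    @Embedding (L₁.sum L₂) M X _ (@sumStructure L₁ L₂ X (Structure.comap u) (Structure.comap v)) :=
  letI := Structure.comap (L := L₁) u
  letI := Structure.comap (L := L₂) v
  letI := (LHom.sumInl : L₁ →ᴸ L₁.sum L₂).reduct M
  letI := (LHom.sumInr : L₂ →ᴸ L₁.sum L₂).reduct M
  Embedding.ofIsRelational i (Function.Injective.of_comp (f := u) (hu ▸ g₁.injective)) <| by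
    rintro n (r | r) x
    · change RelMap r (u ∘ i ∘ x) ↔ _
      rw [← Function.comp_assoc, hu]
      exact g₁.map_rel r x
    · change RelMap r (v ∘ i ∘ x) ↔ _
      rw [← Function.comp_assoc, hv]
      exact g₂.map_rel r x

end Sum

section Amalgamation

variable {L : Language} {K : Set (Bundled.{w} L.Structure)}

theorem _root_.StrongAmalgamation.amalgamation (h : StrongAmalgamation K) : Amalgamation K := by
  intro A B₁ B₂ f₁ f₂ hA hB₁ hB₂
  obtain ⟨C, hC, g₁, g₂, hcomm, -⟩ := h A hA B₁ hB₁ B₂ hB₂ f₁ f₂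
  exact ⟨C, g₁, g₂, hC, hcomm⟩

theorem jointEmbedding_of_amalgamation (hA : Amalgamation K) {E : Bundled.{w} L.Structure}
    (hE : E ∈ K) (hEmb : ∀ M ∈ K, Nonempty (E ↪[L] M)) : JointEmbedding K := by
  intro M hM N hN
  obtain ⟨Q, gM, gN, hQ, -⟩ := hA E M N (hEmb M hM).some (hEmb N hN).some hE hM hN
  exact ⟨Q, hQ, ⟨gM⟩, ⟨gN⟩⟩

end Amalgamation

section Superposition

variable {L₁ : Language.{u₁, v₁}} {L₂ : Language.{u₂, v₂}}
  {K₁ : Set (Bundled.{w} L₁.Structure)} {K₂ : Set (Bundled.{w} L₂.Structure)}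

theorem fg_of_mem_superpositionClass {M : Bundled.{w} (L₁.sum L₂).Structure}
    (hM : M ∈ superpositionClass K₁ K₂) : Structure.FG (L₁.sum L₂) M :=
  have := hM.1
  .of_finite

variable [L₁.IsRelational] [L₂.IsRelational]

theorem hereditary_superpositionClass (hH₁ : Hereditary K₁) (hH₂ : Hereditary K₂) :
    Hereditary (superpositionClass K₁ K₂) := by
  rintro M ⟨-, hM₁, hM₂⟩ N ⟨hN, ⟨f⟩⟩
  have : Finite N := hN.finite
  exact ⟨this, hH₁ _ hM₁ ⟨.of_finite, ⟨f.reduct _⟩⟩, hH₂ _ hM₂ ⟨.of_finite, ⟨f.reduct _⟩⟩⟩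

theorem countable_quotient_superpositionClass (hH₁ : Hereditary K₁) (hH₂ : Hereditary K₂)
    (hc₁ : (Quotient.mk' '' K₁).Countable) (hc₂ : (Quotient.mk' '' K₂).Countable) :
    (Quotient.mk' '' superpositionClass K₁ K₂).Countable := by
  refine countable_quotient_of_countable_setOf_mem (fun M hM => hM.1)
    ((hereditary_superpositionClass hH₁ hH₂).is_equiv_invariant_of_fg
      fun _ => fg_of_mem_superpositionClass) fun n => ?_
  have hreducts : Function.Injective fun s : (L₁.sum L₂).Structure (ULift.{w} (Fin n)) =>
      (@LHom.reduct _ _ LHom.sumInl _ s, @LHom.reduct _ _ LHom.sumInr _ s) :=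
    fun s t h => Structure.sum_ext (congrArg Prod.fst h) (congrArg Prod.snd h)
  exact (((countable_setOf_mem hc₁ _).prod (countable_setOf_mem hc₂ _)).preimage hreducts).mono
    fun _ hs => Set.mk_mem_prod hs.2.1 hs.2.2

theorem exists_mem_superpositionClass_forall_embedding (hne₁ : K₁.Nonempty) (hH₁ : Hereditary K₁)
    (hJ₁ : JointEmbedding K₁) (hne₂ : K₂.Nonempty) (hH₂ : Hereditary K₂)
    (hJ₂ : JointEmbedding K₂) :
    ∃ E ∈ superpositionClass K₁ K₂,
      ∀ M ∈ superpositionClass K₁ K₂, Nonempty (E ↪[L₁.sum L₂] M) := by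
  obtain ⟨M₁, hM₁⟩ := hne₁
  obtain ⟨M₂, hM₂⟩ := hne₂
  -- the empty structure, carrying the nullary relations of `M₁` and `M₂`
  let e₁ : PEmpty.{w + 1} → M₁ := isEmptyElim
  let e₂ : PEmpty.{w + 1} → M₂ := isEmptyElim
  let _ := Structure.comap (L := L₁) e₁
  let _ := Structure.comap (L := L₂) e₂
  refine ⟨⟨PEmpty.{w + 1}, inferInstance⟩, ⟨inferInstance,
    hH₁ _ hM₁ ⟨.of_finite, ⟨Embedding.ofComap (Function.injective_of_subsingleton e₁)⟩⟩,
    hH₂ _ hM₂ ⟨.of_finite, ⟨Embedding.ofComap (Function.injective_of_subsingleton e₂)⟩⟩⟩,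
    fun M hM => ?_⟩
  obtain ⟨Q₁, -, ⟨g₁⟩, ⟨g₁'⟩⟩ := hJ₁ _ hM₁ _ hM.2.1
  obtain ⟨Q₂, -, ⟨g₂⟩, ⟨g₂'⟩⟩ := hJ₂ _ hM₂ _ hM.2.2
  refine ⟨Embedding.ofIsRelational isEmptyElim (Function.injective_of_subsingleton _) ?_⟩
  rintro (_ | n) (r | r) x
  · exact relMap_nullary_iff_of_embedding g₁' g₁ r _ _
  · exact relMap_nullary_iff_of_embedding g₂' g₂ r _ _
  all_goals exact isEmptyElim (x 0)

open Limits.Types in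
theorem strongAmalgamation_superpositionClass (hH₁ : Hereditary K₁) (hH₂ : Hereditary K₂)
    (hSA₁ : StrongAmalgamation K₁) (hSA₂ : StrongAmalgamation K₂) :
    StrongAmalgamation (superpositionClass K₁ K₂) := by
  intro A hA B₁ hB₁ B₂ hB₂ f₁ f₂
  obtain ⟨C₁, hC₁, g₁₁, g₂₁, hcomm₁, hrange₁⟩ :=
    hSA₁ _ hA.2.1 _ hB₁.2.1 _ hB₂.2.1 (f₁.reduct LHom.sumInl) (f₂.reduct LHom.sumInl)
  obtain ⟨C₂, hC₂, g₁₂, g₂₂, hcomm₂, hrange₂⟩ :=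
    hSA₂ _ hA.2.2 _ hB₁.2.2 _ hB₂.2.2 (f₁.reduct LHom.sumInr) (f₂.reduct LHom.sumInr)
  have hsq₁ : ⇑g₁₁ ∘ ⇑f₁ = ⇑g₂₁ ∘ ⇑f₂ := congrArg DFunLike.coe hcomm₁
  have hsq₂ : ⇑g₁₂ ∘ ⇑f₁ = ⇑g₂₂ ∘ ⇑f₂ := congrArg DFunLike.coe hcomm₂
  let u := Pushout.lift g₁₁ g₂₁ hsq₁
  let v := Pushout.lift g₁₂ g₂₂ hsq₂
  have hu : Function.Injective u := Pushout.lift_injective hsq₁ g₁₁.injective g₂₁.injective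
    fun _ _ => Function.exists_eq_of_range_inter_range g₁₁.injective g₂₁.injective hsq₁ hrange₁
  have hv : Function.Injective v := Pushout.lift_injective hsq₂ g₁₂.injective g₂₂.injective
    fun _ _ => Function.exists_eq_of_range_inter_range g₁₂.injective g₂₂.injective hsq₂ hrange₂
  let _ := Structure.comap (L := L₁) u
  let _ := Structure.comap (L := L₂) v
  have := hB₁.1
  have := hB₂.1
  have : Finite (Pushout (↾f₁) (↾f₂)) := Quot.finite _
  refine ⟨⟨Pushout (↾f₁) (↾f₂), inferInstance⟩,
    ⟨this, hH₁ _ hC₁ ⟨.of_finite, ⟨.ofComap hu⟩⟩, hH₂ _ hC₂ ⟨.of_finite, ⟨.ofComap hv⟩⟩⟩,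
    Embedding.toSumComap (Pushout.inl _ _) g₁₁ g₁₂ rfl rfl,
    Embedding.toSumComap (Pushout.inr _ _) g₂₁ g₂₂ rfl rfl, ?_, ?_⟩
  · ext a
    exact Pushout.inl_apply_eq_inr_apply a
  · exact Pushout.range_inl_inter_range_inr f₁.injective

end Superposition

end FirstOrder.Language

theorem stmt13_general {L₁ : FirstOrder.Language.{u₁, v₁}} {L₂ : FirstOrder.Language.{u₂, v₂}}
    [L₁.IsRelational] [L₂.IsRelational]
    (K₁ : Set (Bundled.{w} L₁.Structure)) (K₂ : Set (Bundled.{w} L₂.Structure))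
    (hK₁ : IsFraisse K₁) (hSA₁ : StrongAmalgamation K₁)
    (hK₂ : IsFraisse K₂) (hSA₂ : StrongAmalgamation K₂) :
    IsFraisse (superpositionClass K₁ K₂) ∧
    StrongAmalgamation (superpositionClass K₁ K₂) := by
  have hH := hereditary_superpositionClass hK₁.hereditary hK₂.hereditary
  have hSA := strongAmalgamation_superpositionClass hK₁.hereditary hK₂.hereditary hSA₁ hSA₂
  obtain ⟨E, hE, hEmb⟩ := exists_mem_superpositionClass_forall_embedding
    hK₁.is_nonempty hK₁.hereditary hK₁.jointEmbedding
    hK₂.is_nonempty hK₂.hereditary hK₂.jointEmbedding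
  refine ⟨⟨⟨E, hE⟩, fun _ => fg_of_mem_superpositionClass, ?_, hH,
    jointEmbedding_of_amalgamation hSA.amalgamation hE hEmb, hSA.amalgamation⟩, hSA⟩
  exact countable_quotient_superpositionClass hK₁.hereditary hK₂.hereditary
    hK₁.is_essentially_countable hK₂.is_essentially_countable

/-- If `K₁` and `K₂` are Fraïssé classes of finite structures over disjoint
relational languages, each with the strong amalgamation property, then the class of finite
structures over the sum language whose reducts lie in `K₁` and `K₂` respectively is again a
Fraïssé class with the strong amalgamation property. -/
theorem stmt13 {L₁ : FirstOrder.Language.{u₁, v₁}} {L₂ : FirstOrder.Language.{u₂, v₂}}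
    [L₁.IsRelational] [L₂.IsRelational]
    (K₁ : Set (Bundled.{w} L₁.Structure)) (K₂ : Set (Bundled.{w} L₂.Structure))
    (hK₁ : IsFraisse K₁) (hfin₁ : ∀ A ∈ K₁, Finite A) (hSA₁ : StrongAmalgamation K₁)
    (hK₂ : IsFraisse K₂) (hfin₂ : ∀ A ∈ K₂, Finite A) (hSA₂ : StrongAmalgamation K₂) :
    IsFraisse (superpositionClass K₁ K₂) ∧
    StrongAmalgamation (superpositionClass K₁ K₂) :=
  stmt13_general K₁ K₂ hK₁ hSA₁ hK₂ hSA₂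
end
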